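/- arXiv:1612.04511 — 2 statements merged into one kernel-verified Lean document; each statement's English description precedes it below -/
import Mathlib

section
/- For every n ∈ ℕ and m ∈ ℕ, the sum over all tuples (k_0,…,k_n) of nonnegative integers of (1 + 2^{-m}(k_0 + ⋯ + k_n))^{-(n+2)} is at most (π²/6)·2^{m(n+1)}. -/
/-!
Replacing each `kᵢ` by `kᵢ / 2^m` (rounded down) can only increase the summand, and every tuple `q`
arises in this way from exactly `2^{m(n+1)}` tuples `k`. Grouping the tuples `q` by `s = ∑ qᵢ`,
there are at most `(s+1)^n` of them, since `q` is determined by its last `n` entries, each at most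
`s`. This leaves `2^{m(n+1)} ∑ₛ (1+s)^{-2} = 2^{m(n+1)} π²/6`. The series are compared in `ℝ≥0∞`,
where no summability side conditions arise.
-/

open Finset ENNReal

theorem Real.tsum_le_of_tsum_ofReal_le {α : Type*} {f : α → ℝ} {c : ℝ} (hf : ∀ a, 0 ≤ f a)
    (hc : 0 ≤ c) (h : ∑' a, ENNReal.ofReal (f a) ≤ ENNReal.ofReal c) : ∑' a, f a ≤ c := by
  by_cases hsum : Summable f
  · rwa [← ENNReal.ofReal_le_ofReal_iff hc, ENNReal.ofReal_tsum_of_nonneg hf hsum]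
  · rwa [tsum_eq_zero_of_not_summable hsum]

theorem Nat.cast_sum_div_le {ι : Type*} (s : Finset ι) (k : ι → ℕ) (d : ℕ) :
    ((∑ i ∈ s, k i / d : ℕ) : ℝ) ≤ (d : ℝ)⁻¹ * ∑ i ∈ s, (k i : ℝ) := by
  rw [Nat.cast_sum, mul_sum]
  exact sum_le_sum fun i _ => by simpa [div_eq_inv_mul] using Nat.cast_div_le (α := ℝ)

theorem one_add_zpow_neg_le_of_le {a b : ℝ} {p : ℤ} (hp : 0 ≤ p) (ha : 0 ≤ a) (hab : a ≤ b) :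
    (1 + b) ^ (-p) ≤ (1 + a) ^ (-p) := by
  rw [zpow_neg, zpow_neg]
  exact inv_anti₀ (by positivity) (zpow_le_zpow_left₀ hp (by positivity) (by linarith))

theorem ENNReal.tsum_comp_div_const {ι : Type*} [Fintype ι] (d : ℕ) [NeZero d]
    (h : (ι → ℕ) → ℝ≥0∞) :
    ∑' k : ι → ℕ, h (fun i => k i / d) = d ^ Fintype.card ι * ∑' q, h q := by
  let e : (ι → ℕ) ≃ (ι → ℕ) × (ι → Fin d) :=
    (Equiv.arrowCongr (Equiv.refl _) (Nat.divModEquiv d)).trans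
      (Equiv.arrowProdEquivProdArrow _ _ _)
  calc ∑' k : ι → ℕ, h (fun i => k i / d) = ∑' p : (ι → ℕ) × (ι → Fin d), h p.1 :=
        e.tsum_eq (fun p => h p.1)
    _ = ∑' q, ∑' _ : ι → Fin d, h q := ENNReal.tsum_prod (f := fun q _ => h q)
    _ = d ^ Fintype.card ι * ∑' q, h q := by simp [ENNReal.tsum_mul_left]

theorem ENNReal.tsum_comp_sum_eq_tsum_card_mul (k : ℕ) (g : ℕ → ℝ≥0∞) :
    ∑' q : Fin k → ℕ, g (∑ i, q i) = ∑' s, #(Nat.antidiagonalTuple k s) * g s := by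
  rw [← (Nat.sigmaAntidiagonalTupleEquivTuple k).tsum_eq, ENNReal.tsum_sigma']
  refine tsum_congr fun s => ?_
  rw [tsum_fintype, univ_eq_attach, ← card_attach, ← nsmul_eq_mul, ← sum_const]
  exact sum_congr rfl fun q _ => congrArg g (Nat.mem_antidiagonalTuple.mp q.2)

theorem Finset.Nat.card_antidiagonalTuple_succ_le (n s : ℕ) :
    #(Nat.antidiagonalTuple (n + 1) s) ≤ (s + 1) ^ n := by
  calc #(Nat.antidiagonalTuple (n + 1) s)
      ≤ #(Fintype.piFinset fun _ : Fin n => range (s + 1)) := by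
        refine card_le_card_of_injOn Fin.tail (fun q hq => ?_) (fun q hq q' hq' h => ?_)
        · simp only [mem_coe, Fintype.mem_piFinset, mem_range, Nat.lt_succ_iff]
          intro i
          rw [← Nat.mem_antidiagonalTuple.mp hq]
          exact single_le_sum (fun _ _ => Nat.zero_le _) (mem_univ i.succ)
        · rw [← Fin.cons_self_tail q, ← Fin.cons_self_tail q', ← h]
          have hq := Nat.mem_antidiagonalTuple.mp hq
          have hq' := Nat.mem_antidiagonalTuple.mp hq'
          rw [Fin.sum_univ_succ] at hq hq'
          have htail : ∑ i : Fin n, q i.succ = ∑ i : Fin n, q' i.succ :=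
            congrArg (fun t => ∑ i, t i) h
          congr 1
          omega
    _ = (s + 1) ^ n := by simp

theorem card_antidiagonalTuple_mul_ofReal_le (n s : ℕ) :
    (#(Nat.antidiagonalTuple (n + 1) s) : ℝ≥0∞) * ENNReal.ofReal ((1 + s : ℝ) ^ (-((n : ℤ) + 2)))
      ≤ ENNReal.ofReal ((1 + s : ℝ) ^ (-2 : ℤ)) := by
  rw [← ENNReal.ofReal_natCast, ← ENNReal.ofReal_mul (by positivity)]
  refine ENNReal.ofReal_le_ofReal ?_
  calc (#(Nat.antidiagonalTuple (n + 1) s) : ℝ) * (1 + s : ℝ) ^ (-((n : ℤ) + 2))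
      ≤ (1 + s : ℝ) ^ (n : ℤ) * (1 + s : ℝ) ^ (-((n : ℤ) + 2)) := by
        gcongr
        exact_mod_cast add_comm s 1 ▸ Nat.card_antidiagonalTuple_succ_le n s
    _ = (1 + s : ℝ) ^ (-2 : ℤ) := by
        rw [← zpow_add₀ (by positivity)]
        ring_nf

theorem hasSum_one_add_zpow_neg_two :
    HasSum (fun s : ℕ => (1 + s : ℝ) ^ (-2 : ℤ)) (Real.pi ^ 2 / 6) := by
  simpa [add_comm] using (hasSum_nat_add_iff' 1).mpr hasSum_zeta_two

/-- For every `n m : ℕ`, the sum over all `(n+1)`-tuples `k` of nonnegative integers of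
`(1 + 2^{-m} (k₀ + ⋯ + kₙ))^{-(n+2)}` is at most `(π²/6) · 2^{m(n+1)}`. -/
theorem dyadic_lattice_sum_bound (n m : ℕ) :
    ∑' k : Fin (n + 1) → ℕ,
        ((1 : ℝ) + (2 : ℝ) ^ (-(m : ℤ)) * ∑ i, (k i : ℝ)) ^ (-((n : ℤ) + 2))
      ≤ Real.pi ^ 2 / 6 * 2 ^ (m * (n + 1)) := by
  let g : ℕ → ℝ≥0∞ := fun s => ENNReal.ofReal ((1 + s : ℝ) ^ (-((n : ℤ) + 2)))
  have h2m : (2 : ℝ) ^ (-(m : ℤ)) = ((2 ^ m : ℕ) : ℝ)⁻¹ := by simp [zpow_neg]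
  refine Real.tsum_le_of_tsum_ofReal_le (fun k => by positivity) (by positivity) ?_
  calc ∑' k : Fin (n + 1) → ℕ, ENNReal.ofReal
          (((1 : ℝ) + (2 : ℝ) ^ (-(m : ℤ)) * ∑ i, (k i : ℝ)) ^ (-((n : ℤ) + 2)))
      ≤ ∑' k : Fin (n + 1) → ℕ, g (∑ i, k i / 2 ^ m) := by
        refine ENNReal.tsum_le_tsum fun k => ENNReal.ofReal_le_ofReal ?_
        rw [h2m]
        exact one_add_zpow_neg_le_of_le (by positivity) (by positivity)
          (Nat.cast_sum_div_le _ k _)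
    _ = 2 ^ (m * (n + 1)) * ∑' q : Fin (n + 1) → ℕ, g (∑ i, q i) := by
        rw [ENNReal.tsum_comp_div_const (2 ^ m) fun q => g (∑ i, q i)]
        simp [pow_mul]
    _ = 2 ^ (m * (n + 1)) * ∑' s, #(Nat.antidiagonalTuple (n + 1) s) * g s := by
        rw [ENNReal.tsum_comp_sum_eq_tsum_card_mul]
    _ ≤ 2 ^ (m * (n + 1)) * ∑' s : ℕ, ENNReal.ofReal ((1 + s : ℝ) ^ (-2 : ℤ)) := by
        gcongr with s
        exact card_antidiagonalTuple_mul_ofReal_le n s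
    _ = ENNReal.ofReal (Real.pi ^ 2 / 6 * 2 ^ (m * (n + 1))) := by
        rw [← ENNReal.ofReal_tsum_of_nonneg (fun _ => by positivity)
          hasSum_one_add_zpow_neg_two.summable, hasSum_one_add_zpow_neg_two.tsum_eq,
          ENNReal.ofReal_mul (by positivity), mul_comm]
        simp
end

section
/- Let f ∈ C^n and define φ(λ_0, λ_1, …, λ_{n−1}) = f^{[n]}(λ_0, λ_0, λ_1, …, λ_{n−1}). Then φ(λ_0,…,λ_{n−1}) = ∫_{S^{n−1}} s_0 · f^{(n)}(∑_{j=0}^{n−1} λ_j s_j) dσ_{n−1}(s). -/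
/-!
The proof goes through Hermite–Genocchi, `f^{[n]}(λ₀, …, λₙ) = ∫_{Sⁿ} f^{(n)}(∑ λⱼ sⱼ) dσ`.
Splitting the first barycentric coordinate `t₀` of a point of `Sⁿ⁻¹` into `(u, t₀ - u)` is a
unimodular shear, so integrating over `Sⁿ` becomes integrating over `t ∈ Sⁿ⁻¹` and then over
`u ∈ [0, t₀]`. Along `u` the argument `∑ λⱼ sⱼ` moves with speed `λ₀ - λ₁`, so the inner integral
is a difference quotient of `f^{(n-1)}` and the integral satisfies the recursion of divided
differences; at coincident nodes the derivative is recovered as the limit of these quotients.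
For the nodes `(λ₀, λ₀, λ₁, …)` the speed is zero, so the inner integral just contributes the
weight `t₀`.
-/

open MeasureTheory

noncomputable section

/-- Recursive divided difference of `f`: `f^{[0]} = f` and
`f^{[n]}(λ₀,λ₁,λ̃) = (f^{[n-1]}(λ₀,λ̃) − f^{[n-1]}(λ₁,λ̃))/(λ₀ − λ₁)` for `λ₀ ≠ λ₁`,
extended by the derivative in the first variable when `λ₀ = λ₁`. -/
noncomputable def divDiff (f : ℝ → ℂ) : ℕ → (ℕ → ℝ) → ℂ
  | 0, l => f (l 0)
  | (n + 1), l =>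
      if l 0 = l 1 then
        deriv (fun x : ℝ => divDiff f n (fun j => if j = 0 then x else l (j + 1))) (l 1)
      else
        (divDiff f n (fun j => if j = 0 then l 0 else l (j + 1))
          - divDiff f n (fun j => l (j + 1))) / (((l 0 - l 1 : ℝ)) : ℂ)

section Calculus

variable {E : Type*} [NormedAddCommGroup E] [NormedSpace ℝ E]

lemma hasDerivAt_iteratedDeriv {f : ℝ → E} {n : ℕ} (hf : ContDiff ℝ (n + 1 : ℕ) f) (x : ℝ) :
    HasDerivAt (iteratedDeriv n f) (iteratedDeriv (n + 1) f x) x := by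
  rw [iteratedDeriv_succ]
  exact (hf.differentiable_iteratedDeriv n (by exact_mod_cast n.lt_succ_self) x).hasDerivAt

lemma hasDerivAt_of_slope_eq {φ ψ : ℝ → E} {a : ℝ} (hslope : ∀ x ≠ a, slope φ a x = ψ x)
    (hψ : ContinuousAt ψ a) : HasDerivAt φ (ψ a) a :=
  hasDerivAt_iff_tendsto_slope.2 <| (hψ.tendsto.mono_left nhdsWithin_le_nhds).congr'
    (eventually_nhdsWithin_of_forall fun x hx => (hslope x hx).symm)

lemma integral_comp_mul_add_eq_sub_of_hasDerivAt [CompleteSpace E] {p g : ℝ → E}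
    (hp : ∀ x, HasDerivAt p (g x) x) (hg : Continuous g) {c : ℝ} (hc : c ≠ 0) (b r : ℝ) :
    ∫ u in (0)..b, g (c * u + r) = c⁻¹ • (p (c * b + r) - p r) := by
  rw [intervalIntegral.integral_comp_mul_add _ hc,
    intervalIntegral.integral_eq_sub_of_hasDerivAt (fun x _ => hp x) (hg.intervalIntegrable _ _),
    mul_zero, zero_add]

end Calculus

namespace HermiteGenocchi

open Set

section Simplex

variable {n : ℕ} {E : Type*} [NormedAddCommGroup E] [NormedSpace ℝ E]

def cornerSimplex (n : ℕ) : Set (Fin n → ℝ) := {s | (∀ j, 0 ≤ s j) ∧ ∑ j, s j ≤ 1}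

def baryCoord (s : Fin n → ℝ) (j : Fin (n + 1)) : ℝ :=
  if h : (j : ℕ) < n then s ⟨j, h⟩ else 1 - ∑ i, s i

@[simp]
lemma baryCoord_castSucc (s : Fin n → ℝ) (j : Fin n) : baryCoord s j.castSucc = s j :=
  dif_pos j.isLt

@[simp]
lemma baryCoord_last (s : Fin n → ℝ) : baryCoord s (Fin.last n) = 1 - ∑ i, s i :=
  dif_neg (lt_irrefl n)

lemma sum_baryCoord (s : Fin n → ℝ) : ∑ j, baryCoord s j = 1 := by
  simp [Fin.sum_univ_castSucc]

lemma baryCoord_init {w : Fin (n + 1) → ℝ} (hw : ∑ j, w j = 1) : baryCoord (Fin.init w) = w := by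
  funext j
  refine Fin.lastCases ?_ (fun i => ?_) j
  · rw [Fin.sum_univ_castSucc] at hw
    simp only [baryCoord_last, Fin.init]
    linarith
  · simp [Fin.init]

@[fun_prop]
lemma continuous_baryCoord (j : Fin (n + 1)) : Continuous fun s : Fin n → ℝ => baryCoord s j := by
  unfold baryCoord
  split_ifs <;> fun_prop

lemma mem_cornerSimplex_iff {s : Fin n → ℝ} : s ∈ cornerSimplex n ↔ ∀ j, 0 ≤ baryCoord s j := by
  simp [cornerSimplex, Fin.forall_fin_succ']

lemma isCompact_cornerSimplex (n : ℕ) : IsCompact (cornerSimplex n) := by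
  have hclosed : IsClosed (cornerSimplex n) := by
    have : cornerSimplex n = ⋂ j, {s | 0 ≤ baryCoord s j} := by
      ext s; simp [mem_cornerSimplex_iff]
    rw [this]
    exact isClosed_iInter fun j => isClosed_le continuous_const (continuous_baryCoord j)
  refine (isCompact_Icc (a := 0) (b := 1)).of_isClosed_subset hclosed fun s ⟨hs, hsum⟩ => ?_
  exact ⟨hs, fun j => (Finset.single_le_sum (fun i _ => hs i) (Finset.mem_univ j)).trans hsum⟩

lemma measurableSet_cornerSimplex (n : ℕ) : MeasurableSet (cornerSimplex n) :=
  (isCompact_cornerSimplex n).isClosed.measurableSet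

/-- The point whose barycentric coordinates are `(u, t₀ - u, t₁, …, tₙ)`, where `tⱼ` are those of
`t`; the last one is discarded by `Fin.init` and recomputed by `baryCoord`. -/
def simplexSplit (u : ℝ) (t : Fin n → ℝ) : Fin (n + 1) → ℝ :=
  Fin.init (Fin.cons u (Function.update (baryCoord t) 0 (baryCoord t 0 - u)) : Fin (n + 2) → ℝ)

lemma baryCoord_simplexSplit (u : ℝ) (t : Fin n → ℝ) :
    baryCoord (simplexSplit u t)
      = Fin.cons u (Function.update (baryCoord t) 0 (baryCoord t 0 - u)) := by
  refine baryCoord_init ?_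
  have h := sum_baryCoord t
  rw [Fin.sum_univ_succ] at h
  simp only [Fin.sum_cons, Fin.sum_univ_succ (n := n), Function.update_self,
    Function.update_of_ne (Fin.succ_ne_zero _)]
  linarith

lemma simplexSplit_mem_cornerSimplex_iff {u : ℝ} {t : Fin n → ℝ} :
    simplexSplit u t ∈ cornerSimplex (n + 1) ↔ t ∈ cornerSimplex n ∧ u ∈ Icc 0 (baryCoord t 0) := by
  simp only [mem_cornerSimplex_iff, baryCoord_simplexSplit, Fin.forall_fin_succ (n := n + 1),
    Fin.forall_fin_succ (n := n), Fin.cons_zero, Fin.cons_succ, Function.update_self,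
    Function.update_of_ne (Fin.succ_ne_zero _), mem_Icc]
  constructor
  · rintro ⟨hu, hb, ht⟩
    exact ⟨⟨by linarith, ht⟩, hu, by linarith⟩
  · rintro ⟨⟨-, ht⟩, hu, hb⟩
    exact ⟨hu, by linarith, ht⟩

lemma simplexSplit_eq_cons (u : ℝ) (t : Fin n → ℝ) :
    simplexSplit u t
      = Fin.cons u (t - u • fun j : Fin n => if (j : ℕ) = 0 then (1 : ℝ) else 0) := by
  funext j
  refine Fin.cases ?_ (fun i => ?_) j
  · simp [simplexSplit, Fin.init]
  · by_cases hi : (i : ℕ) = 0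
    · have h0 : i.castSucc = 0 := Fin.ext hi
      simp [simplexSplit, Fin.init, hi, h0, ← baryCoord_castSucc t i]
    · have h0 : i.castSucc ≠ 0 := fun h => hi (congrArg Fin.val h)
      simp [simplexSplit, Fin.init, hi, h0]

lemma measurePreserving_simplexSplit :
    MeasurePreserving (fun q : ℝ × (Fin n → ℝ) => simplexSplit q.1 q.2)
      (volume.prod volume) volume := by
  set e₀ : Fin n → ℝ := fun j => if (j : ℕ) = 0 then 1 else 0
  have hshear : MeasurePreserving (fun q : ℝ × (Fin n → ℝ) => (q.1, q.2 - q.1 • e₀))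
      (volume.prod volume) (volume.prod volume) :=
    (MeasurePreserving.id volume).skew_product (by fun_prop)
      (ae_of_all _ fun u => (measurePreserving_sub_right volume (u • e₀)).map_eq)
  have hcomp : (fun q : ℝ × (Fin n → ℝ) => simplexSplit q.1 q.2)
      = (MeasurableEquiv.piFinSuccAbove (fun _ : Fin (n + 1) => ℝ) 0).symm ∘
          fun q : ℝ × (Fin n → ℝ) => (q.1, q.2 - q.1 • e₀) := by
    funext q
    simp [simplexSplit_eq_cons, MeasurableEquiv.piFinSuccAbove_symm_apply, e₀]
    rfl
  rw [hcomp]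
  exact (volume_preserving_piFinSuccAbove (fun _ : Fin (n + 1) => ℝ) 0).symm.comp hshear

lemma setIntegral_cornerSimplex_succ {F : (Fin (n + 1) → ℝ) → E}
    (hF : IntegrableOn F (cornerSimplex (n + 1))) :
    ∫ s in cornerSimplex (n + 1), F s
      = ∫ t in cornerSimplex n, ∫ u in (0)..(baryCoord t 0), F (simplexSplit u t) := by
  set S := cornerSimplex (n + 1)
  have hΦ := measurePreserving_simplexSplit (n := n)
  have hind : Integrable (S.indicator F) :=
    (integrable_indicator_iff (measurableSet_cornerSimplex _)).2 hF
  have hfiber : ∀ t, ∫ u, S.indicator F (simplexSplit u t) = (cornerSimplex n).indicator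
      (fun t => ∫ u in (0)..(baryCoord t 0), F (simplexSplit u t)) t := by
    intro t
    by_cases ht : t ∈ cornerSimplex n
    · have hb : 0 ≤ baryCoord t 0 := mem_cornerSimplex_iff.1 ht 0
      have hrestrict : (fun u => S.indicator F (simplexSplit u t))
          = (Icc 0 (baryCoord t 0)).indicator fun u => F (simplexSplit u t) := by
        funext u
        simp only [indicator, S, simplexSplit_mem_cornerSimplex_iff, ht, true_and]
      rw [hrestrict, integral_indicator measurableSet_Icc, indicator_of_mem ht,
        integral_Icc_eq_integral_Ioc, intervalIntegral.integral_of_le hb]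
    · have hzero : (fun u => S.indicator F (simplexSplit u t)) = 0 := by
        funext u
        exact indicator_of_notMem (fun h => ht (simplexSplit_mem_cornerSimplex_iff.1 h).1) _
      rw [hzero, indicator_of_notMem ht, Pi.zero_def, integral_zero]
  calc ∫ s in S, F s = ∫ s, S.indicator F s :=
        (integral_indicator (measurableSet_cornerSimplex _)).symm
    _ = ∫ q : ℝ × (Fin n → ℝ), S.indicator F (simplexSplit q.1 q.2) ∂(volume.prod volume) := by
      rw [← hΦ.map_eq, integral_map hΦ.measurable.aemeasurable
        (by rw [hΦ.map_eq]; exact hind.aestronglyMeasurable)]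
    _ = ∫ t, ∫ u, S.indicator F (simplexSplit u t) :=
      integral_prod_symm _ (hΦ.integrable_comp_of_integrable hind)
    _ = _ := by
      simp_rw [hfiber]
      exact integral_indicator (measurableSet_cornerSimplex n)

lemma setIntegral_cornerSimplex_succ_comp_sum {g : ℝ → E} (hg : Continuous g) (l : ℕ → ℝ) :
    ∫ s in cornerSimplex (n + 1), g (∑ j : Fin (n + 2), l j * baryCoord s j)
      = ∫ t in cornerSimplex n, ∫ u in (0)..(baryCoord t 0),
          g ((l 0 - l 1) * u + ∑ j : Fin (n + 1), l (j + 1) * baryCoord t j) := by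
  rw [setIntegral_cornerSimplex_succ
    ((by fun_prop : Continuous _).continuousOn.integrableOn_compact (isCompact_cornerSimplex _))]
  congr! 4 with t u
  simp only [baryCoord_simplexSplit, Fin.sum_univ_succ (n := n + 1), Fin.sum_univ_succ (n := n),
    Fin.cons_zero, Fin.cons_succ, Function.update_self, Function.update_of_ne (Fin.succ_ne_zero _),
    Fin.val_zero, Fin.val_succ, zero_add]
  congr 1
  ring

end Simplex

section DividedDifference

variable {f : ℝ → ℂ}

def hermiteGenocchiIntegral (f : ℝ → ℂ) (n : ℕ) (l : ℕ → ℝ) : ℂ :=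
  ∫ s in cornerSimplex n, iteratedDeriv n f (∑ j : Fin (n + 1), l j * baryCoord s j)

lemma hermiteGenocchiIntegral_succ {n : ℕ} (hf : ContDiff ℝ (n + 1 : ℕ) f) {l : ℕ → ℝ}
    (hl : l 0 ≠ l 1) :
    hermiteGenocchiIntegral f (n + 1) l
      = (hermiteGenocchiIntegral f n (fun j => if j = 0 then l 0 else l (j + 1))
          - hermiteGenocchiIntegral f n (fun j => l (j + 1))) / ((l 0 - l 1 : ℝ) : ℂ) := by
  have hc : l 0 - l 1 ≠ 0 := sub_ne_zero.2 hl
  have hg : Continuous (iteratedDeriv (n + 1) f) := hf.continuous_iteratedDeriv' _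
  have hp : Continuous (iteratedDeriv n f) :=
    hf.continuous_iteratedDeriv n (by exact_mod_cast n.le_succ)
  have hsum (t : Fin n → ℝ) :
      (l 0 - l 1) * baryCoord t 0 + ∑ j : Fin (n + 1), l (j + 1) * baryCoord t j
        = ∑ j : Fin (n + 1), (if (j : ℕ) = 0 then l 0 else l (j + 1)) * baryCoord t j := by
    simp only [Fin.sum_univ_succ, Fin.val_zero, Fin.val_succ, if_true, Nat.succ_ne_zero, if_false]
    ring
  have hint (l' : ℕ → ℝ) : IntegrableOn
      (fun t : Fin n → ℝ => iteratedDeriv n f (∑ j : Fin (n + 1), l' j * baryCoord t j))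
      (cornerSimplex n) :=
    (by fun_prop : Continuous _).continuousOn.integrableOn_compact (isCompact_cornerSimplex n)
  rw [hermiteGenocchiIntegral, setIntegral_cornerSimplex_succ_comp_sum hg]
  simp_rw [integral_comp_mul_add_eq_sub_of_hasDerivAt (hasDerivAt_iteratedDeriv hf) hg hc, hsum]
  rw [integral_smul, integral_sub (hint fun j => if j = 0 then l 0 else l (j + 1))
    (hint fun j => l (j + 1)), Complex.real_smul, Complex.ofReal_inv, inv_mul_eq_div]
  rfl

lemma continuous_hermiteGenocchiIntegral_update_zero {n : ℕ} (hf : Continuous (iteratedDeriv n f))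
    (l : ℕ → ℝ) :
    Continuous fun x => hermiteGenocchiIntegral f n (fun j => if j = 0 then x else l j) := by
  have hsum : Continuous fun q : ℝ × (Fin n → ℝ) =>
      ∑ j : Fin (n + 1), (if (j : ℕ) = 0 then q.1 else l j) * baryCoord q.2 j :=
    continuous_finsetSum _ fun j _ => by split_ifs <;> fun_prop
  exact continuous_parametric_integral_of_continuous (f := fun x s => iteratedDeriv n f
    (∑ j : Fin (n + 1), (if (j : ℕ) = 0 then x else l j) * baryCoord s j)) (hf.comp hsum)
    (isCompact_cornerSimplex n)

lemma hasDerivAt_hermiteGenocchiIntegral_update_zero {n : ℕ} (hf : ContDiff ℝ (n + 1 : ℕ) f)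
    (l : ℕ → ℝ) :
    HasDerivAt (fun x => hermiteGenocchiIntegral f n (fun j => if j = 0 then x else l (j + 1)))
      (hermiteGenocchiIntegral f (n + 1) (fun j => if j = 0 then l 1 else l j)) (l 1) := by
  have htail : (fun j => l (j + 1)) = fun j => if j = 0 then l 1 else l (j + 1) := by
    funext j; split_ifs with hj <;> simp [hj]
  have hcont := continuous_hermiteGenocchiIntegral_update_zero (hf.continuous_iteratedDeriv' _) l
  refine hasDerivAt_of_slope_eq (fun x hx => ?_) hcont.continuousAt
  rw [slope_def_module, hermiteGenocchiIntegral_succ hf (l := fun j => if j = 0 then x else l j)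
    (by simpa using hx)]
  simp only [if_true, Nat.succ_ne_zero, if_false, ← htail]
  rw [Complex.real_smul, Complex.ofReal_inv, inv_mul_eq_div]

theorem divDiff_eq_hermiteGenocchiIntegral {n : ℕ} (hf : ContDiff ℝ n f) (l : ℕ → ℝ) :
    divDiff f n l = hermiteGenocchiIntegral f n l := by
  induction n generalizing l with
  | zero =>
    simp [divDiff, hermiteGenocchiIntegral, baryCoord, cornerSimplex, measureReal_def, volume_pi]
  | succ n ih =>
    have ih' := ih (hf.of_le (by exact_mod_cast n.le_succ))
    by_cases hl : l 0 = l 1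
    · rw [divDiff, if_pos hl]
      simp_rw [ih']
      rw [(hasDerivAt_hermiteGenocchiIntegral_update_zero hf l).deriv]
      congr
      funext j
      split_ifs with hj <;> simp [hj, hl]
    · rw [divDiff, if_neg hl, ih', ih', hermiteGenocchiIntegral_succ hf hl]

end DividedDifference

end HermiteGenocchi

open HermiteGenocchi

/-- For `f ∈ Cⁿ` (with `n = m + 1 ≥ 1`), the function
`φ(λ₀,…,λ_{n−1}) = f^{[n]}(λ₀, λ₀, λ₁, …, λ_{n−1})` has the integral representation
`φ(λ₀,…,λ_{n−1}) = ∫_{S^{n−1}} s₀ f^{(n)}(∑_{j<n} λⱼ sⱼ) dσ_{n−1}`, where the simplex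
measure is realized over `R^{n−1}` with last barycentric coordinate `1 − ∑ sⱼ`. -/
theorem divDiff_repeated_first_arg_integral (m : ℕ) (f : ℝ → ℂ)
    (hf : ContDiff ℝ (m + 1) f) (l : ℕ → ℝ) :
    divDiff f (m + 1) (fun j => if j = 0 then l 0 else l (j - 1))
      = ∫ s in {s : Fin m → ℝ | (∀ j, 0 ≤ s j) ∧ ∑ j, s j ≤ 1},
          ((fun j : Fin (m + 1) =>
              if h : (j : ℕ) < m then s ⟨j, h⟩ else 1 - ∑ i, s i) 0)
            • iteratedDeriv (m + 1) f (∑ j : Fin (m + 1),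
                l (j : ℕ) * (if h : (j : ℕ) < m then s ⟨j, h⟩ else 1 - ∑ i, s i)) := by
  have hf' : ContDiff ℝ (m + 1 : ℕ) f := by exact_mod_cast hf
  set L : ℕ → ℝ := fun j => if j = 0 then l 0 else l (j - 1)
  calc divDiff f (m + 1) L
      = hermiteGenocchiIntegral f (m + 1) L := divDiff_eq_hermiteGenocchiIntegral hf' L
    _ = ∫ t in cornerSimplex m, ∫ u in (0)..(baryCoord t 0), iteratedDeriv (m + 1) f
          ((L 0 - L 1) * u + ∑ j : Fin (m + 1), L (j + 1) * baryCoord t j) :=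
      setIntegral_cornerSimplex_succ_comp_sum (hf'.continuous_iteratedDeriv' _) L
    _ = ∫ t in cornerSimplex m,
          baryCoord t 0 • iteratedDeriv (m + 1) f (∑ j : Fin (m + 1), l j * baryCoord t j) := by
      refine setIntegral_congr_fun (measurableSet_cornerSimplex m) fun t _ => ?_
      simp [L]
end
end
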